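/- arXiv:1004.5540 — 3 statements merged into one kernel-verified Lean document; each statement's English description precedes it below -/
import Mathlib

section
/- For integers m ≥ 1 and r ≥ 2, and any integer w ≥ 0, the coefficient of x^w in ((1+x)^r - r·x)^m is at most C(m + ⌊w/2⌋ - ⌈w/r⌉, ⌊w/2⌋) · (2r-3)^w. -/
/-!
Write `(1 + x) ^ r - r x = 1 + S` with `S = ∑_{u=2}^r C(r,u) x^u`, so that the coefficient is
`∑_k C(m,k) [x^w] S^k`. Put `a = ⌊w/2⌋`, `b = ⌈w/r⌉`, `q = 2r - 3`. A product of `k` monomials of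
degrees in `[2, r]` has degree `w` only if `b ≤ k ≤ a`, and by induction on `k`,
`[x^w] S^k ≤ C(a - b, a - k) q^w`: peeling off one factor `x^u` lowers `a` by at least one and `b`
by at most one, so the induction step only needs `∑_u C(r,u) q^(-u) ≤ 1`. That holds because
`2^(u-1) C(r,u) ≤ q^u` when `r ≥ 3` (and `S = x^2`, `q = 1` when `r = 2`). Vandermonde's identity
`∑_k C(m,k) C(a-b, a-k) = C(m + a - b, a)` finishes the proof.
-/

open Polynomial Finset

theorem Nat.choose_le_choose_add_add (n k d : ℕ) : n.choose k ≤ (n + d).choose (k + d) := by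
  induction d with
  | zero => rfl
  | succ d ih => exact ih.trans ((Nat.le_add_right _ _).trans_eq (Nat.choose_succ_succ _ _).symm)

/-- Here `(w + r - 1) / r` is `⌈w/r⌉`. -/
def coeffMajorant (r k w : ℕ) : ℕ :=
  if k ≤ w / 2 ∧ (w + r - 1) / r ≤ w / 2 then
    (w / 2 - (w + r - 1) / r).choose (w / 2 - k)
  else 0

theorem coeffMajorant_zero_zero (r : ℕ) : coeffMajorant r 0 0 = 1 := by
  simp [coeffMajorant]

theorem coeffMajorant_sub_le_succ {r u w : ℕ} (k : ℕ) (hu : 2 ≤ u) (hur : u ≤ r) (huw : u ≤ w) :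
    coeffMajorant r k (w - u) ≤ coeffMajorant r (k + 1) w := by
  have ha : (w - u) / 2 + 1 ≤ w / 2 := by omega
  have hb : (w + r - 1) / r ≤ (w - u + r - 1) / r + 1 := by
    rw [← Nat.add_div_right _ (by omega : 0 < r)]
    exact Nat.div_le_div_right (by omega)
  unfold coeffMajorant
  split_ifs with h h'
  · calc ((w - u) / 2 - (w - u + r - 1) / r).choose ((w - u) / 2 - k)
        ≤ ((w - u) / 2 - (w - u + r - 1) / r + (w / 2 - 1 - (w - u) / 2)).choose
            ((w - u) / 2 - k + (w / 2 - 1 - (w - u) / 2)) := Nat.choose_le_choose_add_add _ _ _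
      _ ≤ (w / 2 - (w + r - 1) / r).choose (w / 2 - (k + 1)) := by
        rw [show (w - u) / 2 - k + (w / 2 - 1 - (w - u) / 2) = w / 2 - (k + 1) by omega]
        exact Nat.choose_le_choose _ (by omega)
  · exact absurd ⟨by omega, by omega⟩ h'
  · exact Nat.zero_le _
  · exact le_rfl

theorem sum_choose_mul_coeffMajorant_le (r m w : ℕ) :
    ∑ k ∈ range (m + 1), m.choose k * coeffMajorant r k w ≤
      (m + w / 2 - (w + r - 1) / r).choose (w / 2) := by
  by_cases hba : (w + r - 1) / r ≤ w / 2
  · calc ∑ k ∈ range (m + 1), m.choose k * coeffMajorant r k w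
        ≤ ∑ k ∈ range (w / 2 + 1), m.choose k * coeffMajorant r k w := by
          refine sum_le_sum_of_ne_zero fun k _ hk => mem_range.mpr ?_
          by_contra! h
          simp [coeffMajorant, show ¬k ≤ w / 2 by omega] at hk
      _ = ∑ k ∈ range (w / 2 + 1),
            m.choose k * (w / 2 - (w + r - 1) / r).choose (w / 2 - k) :=
          sum_congr rfl fun k hk => by
            rw [coeffMajorant, if_pos ⟨Nat.lt_succ_iff.mp (mem_range.mp hk), hba⟩]
      _ = (m + (w / 2 - (w + r - 1) / r)).choose (w / 2) := by
          rw [Nat.add_choose_eq, Finset.Nat.sum_antidiagonal_eq_sum_range_succ_mk]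
      _ = (m + w / 2 - (w + r - 1) / r).choose (w / 2) := by rw [Nat.add_sub_assoc hba]
  · simp [coeffMajorant, hba]

theorem coeff_pow_le_coeffMajorant {P : ℕ[X]} {r q : ℕ} (hP : P.support ⊆ Icc 2 r)
    (hq : ∀ w, ∑ x ∈ antidiagonal w, P.coeff x.1 * q ^ x.2 ≤ q ^ w) (k w : ℕ) :
    (P ^ k).coeff w ≤ coeffMajorant r k w * q ^ w := by
  induction k generalizing w with
  | zero =>
    rcases eq_or_ne w 0 with rfl | hw
    · simp [coeffMajorant_zero_zero]
    · simp [coeff_one, hw]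
  | succ k ih =>
    rw [pow_succ', coeff_mul]
    calc ∑ x ∈ antidiagonal w, P.coeff x.1 * (P ^ k).coeff x.2
        ≤ ∑ x ∈ antidiagonal w, P.coeff x.1 * (coeffMajorant r (k + 1) w * q ^ x.2) := by
          refine sum_le_sum fun x hx => ?_
          rcases eq_or_ne (P.coeff x.1) 0 with h | h
          · simp [h]
          have hu := mem_Icc.mp (hP (mem_support_iff.mpr h))
          have hw := mem_antidiagonal.mp hx
          refine Nat.mul_le_mul_left _ ((ih x.2).trans (Nat.mul_le_mul_right _ ?_))
          rw [show x.2 = w - x.1 by omega]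
          exact coeffMajorant_sub_le_succ k hu.1 hu.2 (by omega)
      _ = coeffMajorant r (k + 1) w * ∑ x ∈ antidiagonal w, P.coeff x.1 * q ^ x.2 := by
          rw [mul_sum]
          exact sum_congr rfl fun x _ => by ring
      _ ≤ coeffMajorant r (k + 1) w * q ^ w := Nat.mul_le_mul_left _ (hq w)

theorem coeff_one_add_pow_le {P : ℕ[X]} {r q : ℕ} (hP : P.support ⊆ Icc 2 r)
    (hq : ∀ w, ∑ x ∈ antidiagonal w, P.coeff x.1 * q ^ x.2 ≤ q ^ w) (m w : ℕ) :
    ((1 + P) ^ m).coeff w ≤ (m + w / 2 - (w + r - 1) / r).choose (w / 2) * q ^ w := by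
  rw [add_comm, add_pow, finsetSum_coeff]
  calc ∑ k ∈ range (m + 1), (P ^ k * 1 ^ (m - k) * (m.choose k : ℕ[X])).coeff w
      = ∑ k ∈ range (m + 1), m.choose k * (P ^ k).coeff w := by
        simp only [one_pow, mul_one, coeff_mul_natCast, Nat.cast_id, mul_comm]
    _ ≤ ∑ k ∈ range (m + 1), m.choose k * (coeffMajorant r k w * q ^ w) :=
        sum_le_sum fun k _ => Nat.mul_le_mul_left _ (coeff_pow_le_coeffMajorant hP hq k w)
    _ = (∑ k ∈ range (m + 1), m.choose k * coeffMajorant r k w) * q ^ w := by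
        simp only [sum_mul, mul_assoc]
    _ ≤ _ := Nat.mul_le_mul_right _ (sum_choose_mul_coeffMajorant_le r m w)

noncomputable def binomialTail (r : ℕ) : ℕ[X] :=
  ∑ k ∈ Icc 2 r, C (r.choose k) * X ^ k

theorem coeff_binomialTail (r n : ℕ) :
    (binomialTail r).coeff n = if n ∈ Icc 2 r then r.choose n else 0 := by
  simp [binomialTail, finsetSum_coeff]

theorem support_binomialTail_subset (r : ℕ) : (binomialTail r).support ⊆ Icc 2 r := fun n hn => by
  by_contra h
  simp [coeff_binomialTail, h] at hn

theorem one_add_X_pow_eq (r : ℕ) : (1 + X : ℕ[X]) ^ r = 1 + (r : ℕ[X]) * X + binomialTail r := by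
  ext n
  rw [coeff_one_add_X_pow, coeff_add, coeff_add, coeff_binomialTail, coeff_one, coeff_natCast_mul,
    coeff_X]
  rcases n with _ | _ | n
  · simp
  · simp
  · by_cases h : n + 2 ≤ r
    · simp [h]
    · simp [h, Nat.choose_eq_zero_of_lt (by omega : r < n + 2)]

theorem map_one_add_binomialTail (r : ℕ) :
    (1 + binomialTail r).map (Nat.castRingHom ℤ) = (1 + X) ^ r - (r : ℤ[X]) * X := by
  have h := congrArg (Polynomial.map (Nat.castRingHom ℤ)) (one_add_X_pow_eq r)
  simp only [Polynomial.map_add, Polynomial.map_pow, Polynomial.map_one, Polynomial.map_X,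
    Polynomial.map_mul, Polynomial.map_natCast] at h ⊢
  linear_combination -h

theorem two_pow_pred_mul_choose_le {r : ℕ} (hr : 3 ≤ r) (u : ℕ) :
    2 ^ (u - 1) * r.choose u ≤ (2 * r - 3) ^ u := by
  have h2 : 2 ^ (u - 1) ≤ u.factorial := by
    rcases u with _ | u
    · simp
    · simpa [add_comm] using Nat.factorial_mul_pow_le_factorial (m := 1) (n := u)
  calc 2 ^ (u - 1) * r.choose u ≤ u.factorial * r.choose u := Nat.mul_le_mul_right _ h2
    _ = r.descFactorial u := (Nat.descFactorial_eq_factorial_mul_choose r u).symm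
    _ ≤ r ^ u := Nat.descFactorial_le_pow r u
    _ ≤ (2 * r - 3) ^ u := Nat.pow_le_pow_left (by omega) u

theorem sum_coeff_binomialTail_mul_pow_le {r : ℕ} (hr : 2 ≤ r) (w : ℕ) :
    ∑ x ∈ antidiagonal w, (binomialTail r).coeff x.1 * (2 * r - 3) ^ x.2 ≤ (2 * r - 3) ^ w := by
  obtain rfl | hr3 := hr.eq_or_lt
  · simp only [coeff_binomialTail, Finset.Nat.sum_antidiagonal_eq_sum_range_succ_mk]
    simp [sum_ite_eq', apply_ite (· ≤ 1)]
  set q := 2 * r - 3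
  -- the term of index `u` is at most `2^(1-u) q^w`, and `∑_{u ≥ 2} 2^(1-u) < 1`
  have hterm : ∀ x ∈ antidiagonal w, 2 ^ (w - 1) * ((binomialTail r).coeff x.1 * q ^ x.2) ≤
      (if 2 ≤ x.1 then 2 ^ x.2 else 0) * q ^ w := by
    intro x hx
    replace hx := mem_antidiagonal.mp hx
    rw [coeff_binomialTail]
    split_ifs with hmem h2
    · rw [mem_Icc] at hmem
      calc 2 ^ (w - 1) * (r.choose x.1 * q ^ x.2)
          = 2 ^ x.2 * (2 ^ (x.1 - 1) * r.choose x.1) * q ^ x.2 := by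
            rw [show w - 1 = x.2 + (x.1 - 1) by omega, pow_add]; ring
        _ ≤ 2 ^ x.2 * q ^ x.1 * q ^ x.2 := by gcongr; exact two_pow_pred_mul_choose_le hr3 x.1
        _ = 2 ^ x.2 * q ^ w := by rw [← hx, pow_add]; ring
    · exact absurd (mem_Icc.mp hmem).1 h2
    · simp
    · simp
  have hgeom : ∑ x ∈ antidiagonal w, (if 2 ≤ x.1 then 2 ^ x.2 else 0) < 2 ^ (w - 1) := by
    rw [← Finset.Nat.sum_antidiagonal_swap]
    simp only [Prod.fst_swap, Prod.snd_swap]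
    rw [Finset.Nat.sum_antidiagonal_eq_sum_range_succ (fun i j => if 2 ≤ j then 2 ^ i else 0),
      ← sum_filter]
    exact Nat.geomSum_lt le_rfl fun k hk => by simp at hk; omega
  refine Nat.le_of_mul_le_mul_left ?_ (pow_pos two_pos (w - 1))
  calc 2 ^ (w - 1) * ∑ x ∈ antidiagonal w, (binomialTail r).coeff x.1 * q ^ x.2
      ≤ ∑ x ∈ antidiagonal w, (if 2 ≤ x.1 then 2 ^ x.2 else 0) * q ^ w := by
        rw [mul_sum]; exact sum_le_sum hterm
    _ ≤ 2 ^ (w - 1) * q ^ w := by rw [← sum_mul]; exact Nat.mul_le_mul_right _ hgeom.le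

theorem stmt_4_general (m r : ℕ) (hr : 2 ≤ r) (w : ℕ) :
    (((1 + X : ℤ[X]) ^ r - (r : ℤ[X]) * X) ^ m).coeff w ≤
      (((m + w / 2 - (w + r - 1) / r).choose (w / 2) * (2 * r - 3) ^ w : ℕ) : ℤ) := by
  rw [← map_one_add_binomialTail, ← Polynomial.map_pow, coeff_map, eq_natCast, Nat.cast_le]
  exact coeff_one_add_pow_le (support_binomialTail_subset r)
    (sum_coeff_binomialTail_mul_pow_le hr) m w

/-- Coefficient bound for ((1+x)^r - r·x)^m : the coefficient of x^w is at most
C(m + ⌊w/2⌋ - ⌈w/r⌉, ⌊w/2⌋) · (2r-3)^w.  (Lemma 18 of Orlitsky–Viswanathan–Zhang.) -/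
theorem stmt_4 (m r : ℕ) (hm : 1 ≤ m) (hr : 2 ≤ r) (w : ℕ) :
    (((1 + X : ℤ[X]) ^ r - (r : ℤ[X]) * X) ^ m).coeff w ≤
      (((m + w / 2 - (w + r - 1) / r).choose (w / 2) * (2 * r - 3) ^ w : ℕ) : ℤ) :=
  stmt_4_general m r hr w
end

section
/- In a bipartite Tanner graph with girth at least 2k (k ≥ 2) in which every variable node has degree at least 2, every nonempty stopping set has size at least k. -/
open Finset

/-- In a bipartite Tanner graph (variable nodes `V`, check nodes `C`) with girth
at least 2k (k ≥ 2) in which every variable node has degree at least 2, every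
nonempty stopping set has size at least k. -/
theorem stmt_11 {V C : Type*} [Fintype V] [Fintype C] [DecidableEq V] [DecidableEq C]
    (G : SimpleGraph (V ⊕ C)) [DecidableRel G.Adj]
    (hbipV : ∀ v w : V, ¬ G.Adj (Sum.inl v) (Sum.inl w))
    (hbipC : ∀ c d : C, ¬ G.Adj (Sum.inr c) (Sum.inr d))
    (k : ℕ) (hk : 2 ≤ k) (hgirth : (2 * k : ℕ∞) ≤ G.girth)
    (hdeg : ∀ v : V, 2 ≤ G.degree (Sum.inl v))
    (S : Finset V) (hSne : S.Nonempty)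
    (hstop : ∀ c : C, (∃ v ∈ S, G.Adj (Sum.inl v) (Sum.inr c)) →
      2 ≤ (S.filter (fun v => G.Adj (Sum.inl v) (Sum.inr c))).card) :
    k ≤ S.card := by
  classical
  -- every variable node has a check neighbor distinct from any given check
  have hnbr : ∀ (v : V) (c0 : C), ∃ c : C, c ≠ c0 ∧ G.Adj (Sum.inl v) (Sum.inr c) := by
    intro v c0
    have h2 := hdeg v
    rw [← SimpleGraph.card_neighborFinset_eq_degree] at h2
    obtain ⟨x, hx, hxne⟩ :=
      Finset.exists_mem_ne (s := G.neighborFinset (Sum.inl v)) (by omega)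
        (Sum.inr c0 : V ⊕ C)
    rw [SimpleGraph.mem_neighborFinset] at hx
    cases x with
    | inl w => exact absurd hx (hbipV v w)
    | inr c => exact ⟨c, fun h => hxne (by rw [h]), hx⟩
  -- every variable node has some check neighbor
  have hnbr0 : ∀ v : V, ∃ c : C, G.Adj (Sum.inl v) (Sum.inr c) := by
    intro v
    have h2 := hdeg v
    rw [← SimpleGraph.card_neighborFinset_eq_degree] at h2
    obtain ⟨x, hx⟩ := Finset.card_pos.mp (by omega : 0 < (G.neighborFinset (Sum.inl v)).card)
    rw [SimpleGraph.mem_neighborFinset] at hx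
    cases x with
    | inl w => exact absurd hx (hbipV v w)
    | inr c => exact ⟨c, hx⟩
  -- the extension step
  have hstep : ∀ (v : V) (c : C), v ∈ S → G.Adj (Sum.inl v) (Sum.inr c) →
      ∃ v' c', v' ∈ S ∧ v' ≠ v ∧ c' ≠ c ∧ G.Adj (Sum.inl v') (Sum.inr c)
        ∧ G.Adj (Sum.inl v') (Sum.inr c') := by
    intro v c hvS hadj
    have h2 := hstop c ⟨v, hvS, hadj⟩
    obtain ⟨v', hv', hne⟩ := Finset.exists_mem_ne
      (s := S.filter (fun v => G.Adj (Sum.inl v) (Sum.inr c))) (by omega) v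
    rw [Finset.mem_filter] at hv'
    obtain ⟨c', hc'ne, hc'adj⟩ := hnbr v' c
    exact ⟨v', c', hv'.1, hne, hc'ne, hv'.2, hc'adj⟩
  obtain ⟨v0, hv0⟩ := hSne
  obtain ⟨c0, hc0⟩ := hnbr0 v0
  -- the state type
  have hnext : ∀ p : {p : V × C // p.1 ∈ S ∧ G.Adj (Sum.inl p.1) (Sum.inr p.2)},
      ∃ q : {p : V × C // p.1 ∈ S ∧ G.Adj (Sum.inl p.1) (Sum.inr p.2)},
        q.1.1 ≠ p.1.1 ∧ q.1.2 ≠ p.1.2 ∧ G.Adj (Sum.inl q.1.1) (Sum.inr p.1.2) := by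
    rintro ⟨⟨v, c⟩, hvS, hadj⟩
    obtain ⟨v', c', h1, h2, h3, h4, h5⟩ := hstep v c hvS hadj
    exact ⟨⟨(v', c'), h1, h5⟩, h2, h3, h4⟩
  let f : ℕ → {p : V × C // p.1 ∈ S ∧ G.Adj (Sum.inl p.1) (Sum.inr p.2)} :=
    fun n => Nat.rec ⟨(v0, c0), hv0, hc0⟩ (fun _ p => (hnext p).choose) n
  have hfv : ∀ n, ((f (n+1)).1.1 ≠ (f n).1.1) ∧ ((f (n+1)).1.2 ≠ (f n).1.2)
      ∧ G.Adj (Sum.inl (f (n+1)).1.1) (Sum.inr (f n).1.2) := by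
    intro n
    exact (hnext (f n)).choose_spec
  -- the interleaved walk vertices
  let w : ℕ → V ⊕ C := fun n =>
    if n % 2 = 0 then Sum.inl (f (n / 2)).1.1 else Sum.inr (f (n / 2)).1.2
  have hwe : ∀ t, w (2 * t) = Sum.inl (f t).1.1 := by
    intro t
    show (if (2 * t) % 2 = 0 then Sum.inl (f ((2 * t) / 2)).1.1
      else Sum.inr (f ((2 * t) / 2)).1.2) = _
    rw [if_pos (by omega), show (2 * t) / 2 = t by omega]
  have hwo : ∀ t, w (2 * t + 1) = Sum.inr (f t).1.2 := by
    intro t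
    show (if (2 * t + 1) % 2 = 0 then Sum.inl (f ((2 * t + 1) / 2)).1.1
      else Sum.inr (f ((2 * t + 1) / 2)).1.2) = _
    rw [if_neg (by omega), show (2 * t + 1) / 2 = t by omega]
  -- adjacency along the walk
  have hadjw : ∀ n, G.Adj (w n) (w (n + 1)) := by
    intro n
    rcases Nat.even_or_odd n with ⟨t, ht⟩ | ⟨t, ht⟩
    · have h1 : n = 2 * t := by omega
      rw [h1, hwe t, show 2 * t + 1 = 2 * t + 1 from rfl, hwo t]
      exact (f t).2.2
    · have h1 : n = 2 * t + 1 := by omega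
      rw [h1, hwo t, show 2 * t + 1 + 1 = 2 * (t + 1) by ring, hwe (t + 1)]
      exact ((hfv t).2.2).symm
  -- non-backtracking
  have hnb : ∀ n, w n ≠ w (n + 2) := by
    intro n h
    rcases Nat.even_or_odd n with ⟨t, ht⟩ | ⟨t, ht⟩
    · have h1 : n = 2 * t := by omega
      rw [h1, hwe t, show 2 * t + 2 = 2 * (t + 1) by ring, hwe (t + 1)] at h
      exact (hfv t).1 (Sum.inl.inj h).symm
    · have h1 : n = 2 * t + 1 := by omega
      rw [h1, hwo t, show 2 * t + 1 + 2 = 2 * (t + 1) + 1 by ring, hwo (t + 1)] at h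
      exact (hfv t).2.1 (Sum.inr.inj h).symm
  -- walks along the sequence
  let W : ∀ i n, G.Walk (w (i + n)) (w i) := fun i n =>
    Nat.rec SimpleGraph.Walk.nil (fun m p => SimpleGraph.Walk.cons (hadjw (i + m)).symm p) n
  have hWlen : ∀ i n, (W i n).length = n := by
    intro i n
    induction n with
    | zero => rfl
    | succ m ih =>
      have h : W i (m + 1) = SimpleGraph.Walk.cons (hadjw (i + m)).symm (W i m) := rfl
      rw [h, SimpleGraph.Walk.length_cons, ih]
  have hWsup : ∀ i n x, x ∈ (W i n).support ↔ ∃ t, t ≤ n ∧ x = w (i + t) := by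
    intro i n
    induction n with
    | zero =>
      intro x
      have h : W i 0 = SimpleGraph.Walk.nil := rfl
      rw [h]
      simp only [SimpleGraph.Walk.support_nil, List.mem_singleton]
      constructor
      · intro hx; exact ⟨0, le_refl _, hx⟩
      · rintro ⟨t, ht, hx⟩
        have : t = 0 := by omega
        rw [this] at hx; exact hx
    | succ m ih =>
      intro x
      have h : W i (m + 1) = SimpleGraph.Walk.cons (hadjw (i + m)).symm (W i m) := rfl
      rw [h, SimpleGraph.Walk.support_cons, List.mem_cons, ih]
      constructor
      · rintro (hx | ⟨t, ht, hx⟩)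
        · exact ⟨m + 1, le_refl _, hx⟩
        · exact ⟨t, by omega, hx⟩
      · rintro ⟨t, ht, hx⟩
        rcases Nat.lt_or_ge t (m + 1) with h' | h'
        · exact Or.inr ⟨t, by omega, hx⟩
        · have : t = m + 1 := by omega
          rw [this] at hx
          exact Or.inl hx
  have hWedge : ∀ i n e, e ∈ (W i n).edges ↔
      ∃ t, t < n ∧ e = s(w (i + t + 1), w (i + t)) := by
    intro i n
    induction n with
    | zero =>
      intro e
      have h : W i 0 = SimpleGraph.Walk.nil := rfl
      rw [h]
      simp only [SimpleGraph.Walk.edges_nil, List.not_mem_nil, false_iff]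
      rintro ⟨t, ht, _⟩
      omega
    | succ m ih =>
      intro e
      have h : W i (m + 1) = SimpleGraph.Walk.cons (hadjw (i + m)).symm (W i m) := rfl
      rw [h, SimpleGraph.Walk.edges_cons, List.mem_cons, ih]
      constructor
      · rintro (hx | ⟨t, ht, hx⟩)
        · exact ⟨m, by omega, hx⟩
        · exact ⟨t, by omega, hx⟩
      · rintro ⟨t, ht, hx⟩
        rcases Nat.lt_or_ge t m with h' | h'
        · exact Or.inr ⟨t, h', hx⟩
        · have : t = m := by omega
          rw [this] at hx
          exact Or.inl hx
  have hWnodup : ∀ i n, (∀ s t, s ≤ n → t ≤ n → w (i + s) = w (i + t) → s = t) →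
      (W i n).support.Nodup := by
    intro i n
    induction n with
    | zero =>
      intro _
      have h : W i 0 = SimpleGraph.Walk.nil := rfl
      rw [h]
      simp
    | succ m ih =>
      intro hinj
      have h : W i (m + 1) = SimpleGraph.Walk.cons (hadjw (i + m)).symm (W i m) := rfl
      rw [h, SimpleGraph.Walk.support_cons]
      refine List.nodup_cons.mpr ⟨?_, ih (fun s t hs ht hh => hinj s t (by omega) (by omega) hh)⟩
      intro hmem
      rw [hWsup] at hmem
      obtain ⟨t, ht, hh⟩ := hmem
      have := hinj (m + 1) t (le_refl _) (by omega) hh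
      omega
  -- key distinctness claim
  have key : ∀ j, j ≤ 2 * k - 2 → ∀ i, i < j → w i ≠ w j := by
    intro j
    induction j using Nat.strong_induction_on with
    | _ j IH =>
      intro hj i hij heq
      have hdist : ∀ s t, s < j → t < j → w s = w t → s = t := by
        intro s t hs ht hh
        by_contra hne
        rcases Nat.lt_or_ge s t with h' | h'
        · exact IH t ht (by omega) s h' hh
        · exact IH s hs (by omega) t (by omega) hh.symm
      rcases Nat.lt_or_ge i (j - 1) with hi1 | hi1
      · -- j ≥ i + 2 : build a cycle of length j - i < 2k
        set n := j - 1 - i with hn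
        have hin : i + n = j - 1 := by omega
        have hinj : ∀ s t, s ≤ n → t ≤ n → w (i + s) = w (i + t) → s = t := by
          intro s t hs ht hh
          have := hdist (i + s) (i + t) (by omega) (by omega) hh
          omega
        have hpath : (W i n).IsPath :=
          (SimpleGraph.Walk.isPath_def _).mpr (hWnodup i n hinj)
        have h1 : G.Adj (w (j - 1)) (w j) := by
          have h := hadjw (j - 1)
          rwa [show j - 1 + 1 = j by omega] at h
        have hcadj : G.Adj (w (i + n)) (w i) := by
          rw [hin, heq]; exact h1
        have hedge : s(w i, w (i + n)) ∉ (W i n).edges := by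
          rw [hWedge]
          rintro ⟨t, ht, hst⟩
          rw [Sym2.eq_iff] at hst
          rcases hst with ⟨hh1, hh2⟩ | ⟨hh1, hh2⟩
          · have := hdist i (i + t + 1) (by omega) (by omega) hh1
            omega
          · have ht0 : t = 0 := by
              have := hdist i (i + t) (by omega) (by omega) hh1
              omega
            have hn1 : i + n = i + t + 1 := by
              have := hdist (i + n) (i + t + 1) (by omega) (by omega) hh2
              omega
            have hj2 : j = i + 2 := by omega
            exact hnb i (by rw [← hj2]; exact heq)
        have hcyc : (SimpleGraph.Walk.cons hcadj.symm (W i n)).IsCycle :=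
          (SimpleGraph.Walk.cons_isCycle_iff _ _).mpr ⟨hpath, hedge⟩
        have hlen : (SimpleGraph.Walk.cons hcadj.symm (W i n)).length = n + 1 := by
          rw [SimpleGraph.Walk.length_cons, hWlen]
        have hle : G.egirth ≤ ((n + 1 : ℕ) : ℕ∞) := by
          by_contra hcon
          push_neg at hcon
          have h2 : ((n + 1 : ℕ) : ℕ∞) + 1 ≤ G.egirth := Order.add_one_le_of_lt hcon
          have h3 : ((n + 2 : ℕ) : ℕ∞) ≤ G.egirth := by
            rwa [show ((n + 2 : ℕ) : ℕ∞) = ((n + 1 : ℕ) : ℕ∞) + 1 by push_cast; ring]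
          rw [SimpleGraph.le_egirth] at h3
          have h4 := h3 _ _ hcyc
          rw [hlen] at h4
          have h5 : n + 2 ≤ n + 1 := by exact_mod_cast h4
          omega
        have hg2 : ((2 * k : ℕ) : ℕ∞) ≤ G.egirth := by
          refine le_trans ?_ (ENat.coe_toNat_le_self G.egirth)
          exact_mod_cast hgirth
        have h6 : ((2 * k : ℕ) : ℕ∞) ≤ ((n + 1 : ℕ) : ℕ∞) := le_trans hg2 hle
        have h7 : 2 * k ≤ n + 1 := by exact_mod_cast h6
        omega
      · -- j = i + 1
        have hj1 : j = i + 1 := by omega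
        exact (hadjw i).ne (by rw [← hj1]; exact heq)
  -- conclude
  have hvinj : ∀ s t, s < k → t < k → (f s).1.1 = (f t).1.1 → s = t := by
    intro s t hs ht hh
    have hws : w (2 * s) = w (2 * t) := by rw [hwe, hwe, hh]
    by_contra hne
    rcases Nat.lt_or_ge (2 * s) (2 * t) with h' | h'
    · exact key (2 * t) (by omega) (2 * s) h' hws
    · exact key (2 * s) (by omega) (2 * t) (by omega) hws.symm
  have hcard : ((Finset.range k).image fun t => (f t).1.1).card = k := by
    rw [Finset.card_image_of_injOn, Finset.card_range]
    intro s hs t ht hh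
    exact hvinj s t (Finset.mem_range.mp hs) (Finset.mem_range.mp ht) hh
  have hsub : ((Finset.range k).image fun t => (f t).1.1) ⊆ S := by
    intro x hx
    obtain ⟨t, _, rfl⟩ := Finset.mem_image.mp hx
    exact (f t).2.1
  calc k = ((Finset.range k).image fun t => (f t).1.1).card := hcard.symm
    _ ≤ S.card := Finset.card_le_card hsub
end

section
/- Let G be an (n, n-k) binary linear code with generator matrix 𝐆 ∈ 𝔽₂^{(n-k)×n}, and let a message M uniform on 𝔽₂^k be encoded by choosing X uniformly from the coset {x : H·xᵀ = M} where H is a parity-check matrix of the code. Suppose the eavesdropper observes the coordinates in a set I ⊆ {1,…,n}. If the submatrix 𝐆_I of 𝐆 consisting of columns indexed by I has full column rank, i.e., rank(𝐆_I) = |I|, then X restricted to I is independent of M, so H(M | X_I) = k. -/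
open Finset
open scoped Classical
open Matrix

lemma aux_surj {m n : Type*} [Fintype m] [Fintype n] (A : Matrix m n (ZMod 2))
    (h : A.rank = Fintype.card m) : Function.Surjective A.mulVec := by
  have htop : LinearMap.range A.mulVecLin = ⊤ := by
    apply Submodule.eq_top_of_finrank_eq
    rw [← Matrix.rank, h, Module.finrank_pi]
  intro w
  obtain ⟨v, hv⟩ := LinearMap.range_eq_top.mp htop w
  exact ⟨v, hv⟩

lemma fiber_card {V W : Type*} [AddCommGroup V] [AddCommGroup W]
    [Module (ZMod 2) V] [Module (ZMod 2) W] [Fintype V] [Fintype W]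
    (L : V →ₗ[ZMod 2] W) (hs : Function.Surjective L) (w : W) :
    Nat.card {v // L v = w} * Nat.card W = Nat.card V := by
  simp only [Nat.card_eq_fintype_card]
  have hker : ∀ w : W, Fintype.card {v // L v = w} = Fintype.card (LinearMap.ker L) := by
    intro w
    obtain ⟨v0, hv0⟩ := hs w
    refine Fintype.card_congr ⟨fun v => ⟨v.1 - v0, ?_⟩, fun z => ⟨z.1 + v0, ?_⟩, ?_, ?_⟩
    · simp [LinearMap.mem_ker, map_sub, v.2, hv0]
    · have := z.2
      simp [LinearMap.mem_ker] at this
      simp [map_add, this, hv0]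
    · intro v; ext; simp
    · intro z; ext; simp
  have hsum : Fintype.card V = ∑ w : W, Fintype.card {v // L v = w} := by
    rw [← Fintype.card_sigma]
    exact Fintype.card_congr (Equiv.sigmaFiberEquiv (⇑L)).symm
  rw [hker w, hsum]
  simp only [hker, Finset.sum_const, Finset.card_univ, smul_eq_mul]
  ring

lemma ent2_uniform_aux {α : Type*} [Fintype α] [Nonempty α] (P : α → ℝ) (N : ℕ)
    (hN : Fintype.card α = N) (hP : ∀ x, P x = 1 / (N : ℝ)) :
    (-∑ x, P x * Real.logb 2 (P x)) = Real.logb 2 N := by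
  have hN0 : (0:ℝ) < N := by
    have : 0 < Fintype.card α := Fintype.card_pos
    exact_mod_cast hN ▸ this
  simp only [hP, Finset.sum_const, Finset.card_univ, hN, smul_eq_mul, one_div,
    Real.logb_inv]
  field_simp
  rw [nsmul_eq_mul, mul_neg, neg_neg, mul_div_assoc', mul_div_cancel_left₀ _ hN0.ne']

/-- Shannon entropy (base 2) of a probability mass function on a finite type. -/
noncomputable def ent2 {α : Type*} [Fintype α] (P : α → ℝ) : ℝ :=
  -∑ x, P x * Real.logb 2 (P x)

/-- Marginal of the second coordinate. -/
noncomputable def margZ {α β : Type*} [Fintype α] (P : α × β → ℝ) (z : β) : ℝ :=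
  ∑ m, P (m, z)

/-- Conditional entropy H(M|Z) = H(M,Z) - H(Z). -/
noncomputable def condEnt {α β : Type*} [Fintype α] [Fintype β] (P : α × β → ℝ) : ℝ :=
  ent2 P - ent2 (margZ P)

/-- Ozarow–Wyner: in the coset coding scheme (M uniform on 𝔽₂^k, X uniform on the
coset {x : H·x = M}), if the column submatrix G_I of the generator matrix has full
rank |I|, then H(M | X_I) = k, i.e., M is independent of the observed coordinates. -/
theorem stmt_18 (n k : ℕ) (hkn : k ≤ n)
    (G : Matrix (Fin (n - k)) (Fin n) (ZMod 2))
    (H : Matrix (Fin k) (Fin n) (ZMod 2))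
    (hHG : H * G.transpose = 0)
    (hrankG : G.rank = n - k) (hrankH : H.rank = k)
    (I : Finset (Fin n))
    (hfull : (G.submatrix id (fun i : {i // i ∈ I} => (i : Fin n))).rank = I.card)
    -- the joint distribution of (M, X_I) induced by the coset coding scheme:
    (Q : (Fin k → ZMod 2) × ({i // i ∈ I} → ZMod 2) → ℝ)
    (hQ : ∀ m y, Q (m, y) = ∑ x : Fin n → ZMod 2,
      if H.mulVec x = m ∧ (∀ i : {i // i ∈ I}, x i = y i)
        then (1 : ℝ) / 2 ^ n else 0) :
    condEnt Q = k := by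
  set c := I.card with hc
  have hcardI : Fintype.card {i // i ∈ I} = c := Fintype.card_coe I
  -- the linear map x ↦ (Hx, x_I)
  set L : (Fin n → ZMod 2) →ₗ[ZMod 2]
      (Fin k → ZMod 2) × ({i // i ∈ I} → ZMod 2) :=
    LinearMap.prod H.mulVecLin
      (LinearMap.funLeft (ZMod 2) (ZMod 2) (fun i : {i // i ∈ I} => (i : Fin n)))
    with hL
  have hLapp : ∀ x, L x = (H.mulVec x, fun i : {i // i ∈ I} => x i) := by
    intro x; rfl
  -- surjectivity of L
  have hHsurj : Function.Surjective H.mulVec :=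
    aux_surj H (by rw [hrankH, Fintype.card_fin])
  set A : Matrix (Fin (n - k)) {i // i ∈ I} (ZMod 2) :=
    G.submatrix id (fun i : {i // i ∈ I} => (i : Fin n)) with hA
  have hAsurj : Function.Surjective Aᵀ.mulVec :=
    aux_surj Aᵀ (by rw [Matrix.rank_transpose, hfull, hcardI])
  have hLsurj : Function.Surjective L := by
    rintro ⟨m, y⟩
    obtain ⟨x0, hx0⟩ := hHsurj m
    obtain ⟨c0, hc0⟩ := hAsurj (y - fun i : {i // i ∈ I} => x0 i)
    refine ⟨x0 + Gᵀ.mulVec c0, ?_⟩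
    rw [hLapp]
    simp only [Prod.mk.injEq]
    constructor
    · rw [Matrix.mulVec_add, Matrix.mulVec_mulVec, hHG, Matrix.zero_mulVec, hx0, add_zero]
    · funext i
      have hAi : Gᵀ.mulVec c0 (i : Fin n) = Aᵀ.mulVec c0 i := by
        simp [Matrix.mulVec, Matrix.transpose_apply, Matrix.submatrix_apply, hA, dotProduct]
      have := congrFun hc0 i
      simp only [Pi.sub_apply] at this
      simp only [Pi.add_apply, hAi, this]
      ring
  -- fiber cardinality
  have hcardV : Fintype.card (Fin n → ZMod 2) = 2 ^ n := by simp
  have hcardW : Fintype.card ((Fin k → ZMod 2) × ({i // i ∈ I} → ZMod 2)) = 2 ^ (k + c) := by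
    simp [hcardI, pow_add]
    rfl
  -- value of Q
  have hQval : ∀ m y, Q (m, y) = 1 / 2 ^ (k + c) := by
    intro m y
    rw [hQ]
    have hpred : ∀ x : Fin n → ZMod 2,
        (H.mulVec x = m ∧ (∀ i : {i // i ∈ I}, x i = y i)) ↔ L x = (m, y) := by
      intro x
      rw [hLapp, Prod.ext_iff]
      constructor
      · rintro ⟨h1, h2⟩; exact ⟨h1, funext h2⟩
      · rintro ⟨h1, h2⟩; exact ⟨h1, fun i => congrFun h2 i⟩
    have hsum : (∑ x : Fin n → ZMod 2,
        if H.mulVec x = m ∧ (∀ i : {i // i ∈ I}, x i = y i)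
          then (1 : ℝ) / 2 ^ n else 0)
        = (Nat.card {x // L x = (m, y)}) * ((1:ℝ) / 2 ^ n) := by
      simp only [hpred]
      rw [Finset.sum_ite, Finset.sum_const_zero, add_zero, Finset.sum_const,
        nsmul_eq_mul]
      congr 2
      rw [Nat.card_eq_fintype_card, Fintype.card_subtype]
    rw [hsum]
    have hfib := fiber_card L hLsurj (m, y)
    simp only [Nat.card_eq_fintype_card] at hfib
    rw [hcardV, hcardW] at hfib
    simp only [← Nat.card_eq_fintype_card] at hfib
    have h2 : ((Nat.card {x // L x = (m, y)} : ℝ)) * 2 ^ (k + c) = 2 ^ n := by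
      exact_mod_cast hfib
    have hpos : (0:ℝ) < 2 ^ (k + c) := by positivity
    have hpos2 : (0:ℝ) < 2 ^ n := by positivity
    rw [mul_one_div, div_eq_div_iff hpos2.ne' hpos.ne', one_mul]
    linarith [h2]
  -- entropy computations
  have hmarg : ∀ y, margZ Q y = 1 / 2 ^ c := by
    intro y
    unfold margZ
    simp only [hQval]
    rw [Finset.sum_const, Finset.card_univ]
    simp [pow_add]
    field_simp
  have hent1 : ent2 Q = Real.logb 2 (((2 ^ (k + c) : ℕ) : ℝ)) := by
    unfold ent2
    apply ent2_uniform_aux Q (2 ^ (k + c)) hcardW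
    rintro ⟨m, y⟩
    rw [hQval]; push_cast; ring_nf
  have hent2 : ent2 (margZ Q) = Real.logb 2 (((2 ^ c : ℕ) : ℝ)) := by
    unfold ent2
    apply ent2_uniform_aux (margZ Q) (2 ^ c) (by simp [hcardI]; rfl)
    intro y
    rw [hmarg]; push_cast; ring_nf
  unfold condEnt
  rw [hent1, hent2]
  push_cast
  rw [Real.logb_pow, Real.logb_pow, Real.logb_self_eq_one (by norm_num)]
  push_cast; ring
end
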